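/- arXiv:2402.13197 — 2 statements merged into one kernel-verified Lean document; each statement's English description precedes it below -/
import Mathlib

section
/- Let E be a finite-dimensional real vector space with a symmetric bilinear form ⟨·,·⟩. Let (x_k) be a sequence in E, let x, x₀, z ∈ E with ⟨z,x⟩ < 0 and ⟨z,x₀⟩ < 0, and suppose there are positive reals λ_k → 0 with λ_k x_k → z. Assume moreover ⟨x_k, x⟩ ≤ −1 and ⟨x_k, x₀⟩ ≤ −1 for all k. Then exp( arcosh(−⟨x_k,x⟩) − arcosh(−⟨x_k,x₀⟩) ) converges to ⟨z,x⟩/⟨z,x₀⟩ as k → ∞. -/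
/-! Although `exp (arcosh t) = t + √(t² - 1)` diverges along `t_k = -⟨x_k, x⟩`, the rescaled
values `λ (t + √(t² - 1)) = λ t + √((λ t)² - λ²)` converge to `-2 ⟨z, x⟩`, because `λ_k → 0` and
`λ_k t_k → -⟨z, x⟩ > 0`. The exponential of a difference of two arcosh values is a ratio of such
quantities, in which the scale `λ_k` cancels. -/

open Filter Topology

/-- The inverse hyperbolic cosine, arcosh(t) = log(t + √(t² - 1)). -/
noncomputable def arcosh (t : ℝ) : ℝ := Real.log (t + Real.sqrt (t ^ 2 - 1))

theorem exp_arcosh {t : ℝ} (ht : 1 ≤ t) : Real.exp (arcosh t) = t + Real.sqrt (t ^ 2 - 1) :=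
  Real.exp_log (by positivity)

theorem mul_exp_arcosh {s t : ℝ} (hs : 0 ≤ s) (ht : 1 ≤ t) :
    s * Real.exp (arcosh t) = s * t + Real.sqrt ((s * t) ^ 2 - s ^ 2) := by
  rw [exp_arcosh ht, show (s * t) ^ 2 - s ^ 2 = s ^ 2 * (t ^ 2 - 1) by ring,
    Real.sqrt_mul (sq_nonneg s), Real.sqrt_sq hs, mul_add]

theorem tendsto_mul_exp_arcosh {α : Type*} {f : Filter α} {s t : α → ℝ} {c : ℝ} (hc : 0 ≤ c)
    (hs : ∀ i, 0 ≤ s i) (ht : ∀ i, 1 ≤ t i) (hs0 : Tendsto s f (𝓝 0))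
    (hst : Tendsto (fun i => s i * t i) f (𝓝 c)) :
    Tendsto (fun i => s i * Real.exp (arcosh (t i))) f (𝓝 (2 * c)) := by
  have hsqrt : Tendsto (fun i => Real.sqrt ((s i * t i) ^ 2 - s i ^ 2)) f
      (𝓝 (Real.sqrt (c ^ 2 - 0 ^ 2))) :=
    ((hst.pow 2).sub (hs0.pow 2)).sqrt
  rw [zero_pow two_ne_zero, sub_zero, Real.sqrt_sq hc] at hsqrt
  simpa only [mul_exp_arcosh (hs _) (ht _), two_mul] using hst.add hsqrt

theorem tendsto_exp_arcosh_sub_arcosh {α : Type*} {f : Filter α} {s t u : α → ℝ} {c d : ℝ}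
    (hc : 0 ≤ c) (hd : 0 < d) (hs : ∀ i, 0 < s i) (ht : ∀ i, 1 ≤ t i) (hu : ∀ i, 1 ≤ u i)
    (hs0 : Tendsto s f (𝓝 0)) (hst : Tendsto (fun i => s i * t i) f (𝓝 c))
    (hsu : Tendsto (fun i => s i * u i) f (𝓝 d)) :
    Tendsto (fun i => Real.exp (arcosh (t i) - arcosh (u i))) f (𝓝 (c / d)) := by
  have hs' : ∀ i, 0 ≤ s i := fun i => (hs i).le
  have hratio := (tendsto_mul_exp_arcosh hc hs' ht hs0 hst).div
    (tendsto_mul_exp_arcosh hd.le hs' hu hs0 hsu) (by positivity)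
  rw [mul_div_mul_left _ _ two_ne_zero] at hratio
  refine hratio.congr fun i => ?_
  rw [Pi.div_apply, Real.exp_sub, mul_div_mul_left _ _ (hs i).ne']

theorem tendsto_mul_apply_of_tendsto_smul {α E : Type*} [NormedAddCommGroup E] [NormedSpace ℝ E]
    [FiniteDimensional ℝ E] {f : Filter α} {s : α → ℝ} {x : α → E} {z : E} (φ : E →ₗ[ℝ] ℝ)
    (hsx : Tendsto (fun i => s i • x i) f (𝓝 z)) :
    Tendsto (fun i => s i * φ (x i)) f (𝓝 (φ z)) := by
  simpa only [Function.comp_def, map_smul, smul_eq_mul] using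
    (φ.continuous_of_finiteDimensional.tendsto z).comp hsx

theorem stmt_5_general (E : Type*) [NormedAddCommGroup E] [NormedSpace ℝ E]
    [FiniteDimensional ℝ E]
    (B : E →ₗ[ℝ] E →ₗ[ℝ] ℝ)
    (x : ℕ → E) (x' x₀ z : E) (l : ℕ → ℝ)
    (hzx : B z x' < 0) (hzx₀ : B z x₀ < 0)
    (hl : ∀ k, 0 < l k) (hl0 : Tendsto l atTop (nhds 0))
    (hlx : Tendsto (fun k => l k • x k) atTop (nhds z))
    (hx : ∀ k, B (x k) x' ≤ -1) (hx₀ : ∀ k, B (x k) x₀ ≤ -1) :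
    Tendsto (fun k => Real.exp (arcosh (-(B (x k) x')) - arcosh (-(B (x k) x₀))))
      atTop (nhds (B z x' / B z x₀)) := by
  have hlim : ∀ v, Tendsto (fun k => l k * -B (x k) v) atTop (𝓝 (-B z v)) := fun v => by
    simpa only [mul_neg, LinearMap.flip_apply] using
      (tendsto_mul_apply_of_tendsto_smul (B.flip v) hlx).neg
  rw [← neg_div_neg_eq]
  exact tendsto_exp_arcosh_sub_arcosh (neg_nonneg.2 hzx.le) (neg_pos.2 hzx₀) hl
    (fun k => le_neg.2 (hx k)) (fun k => le_neg.2 (hx₀ k)) hl0 (hlim x') (hlim x₀)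

/-- Renormalized spacelike distance functions converge to the ratio defining
the space-horofunction: if λ_k x_k → z with λ_k → 0⁺ and ⟨z,x⟩, ⟨z,x₀⟩ < 0,
then exp(arcosh(-⟨x_k,x⟩) - arcosh(-⟨x_k,x₀⟩)) → ⟨z,x⟩/⟨z,x₀⟩. -/
theorem stmt_5 (E : Type*) [NormedAddCommGroup E] [NormedSpace ℝ E]
    [FiniteDimensional ℝ E]
    (B : E →ₗ[ℝ] E →ₗ[ℝ] ℝ) (hsymm : ∀ x y, B x y = B y x)
    (x : ℕ → E) (x' x₀ z : E) (l : ℕ → ℝ)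
    (hzx : B z x' < 0) (hzx₀ : B z x₀ < 0)
    (hl : ∀ k, 0 < l k) (hl0 : Tendsto l atTop (nhds 0))
    (hlx : Tendsto (fun k => l k • x k) atTop (nhds z))
    (hx : ∀ k, B (x k) x' ≤ -1) (hx₀ : ∀ k, B (x k) x₀ ≤ -1) :
    Tendsto (fun k => Real.exp (arcosh (-(B (x k) x')) - arcosh (-(B (x k) x₀))))
      atTop (nhds (B z x' / B z x₀)) :=
  stmt_5_general E B x x' x₀ z l hzx hzx₀ hl hl0 hlx hx hx₀
end

section
/- Let (z₁,z₂,z₃,z₄) be a hyperbolic basis of (E,q) and f(u,v) = eᵘ z₁ + eᵛ z₂ + e⁻ᵘ z₃ + e⁻ᵛ z₄. Denote ∂_u f = eᵘ z₁ − e⁻ᵘ z₃ and ∂_v f = eᵛ z₂ − e⁻ᵛ z₄ (the partial derivatives of f). Then for all (u,v): ⟨∂_u f, ∂_u f⟩ = 1/2, ⟨∂_v f, ∂_v f⟩ = 1/2, and ⟨∂_u f, ∂_v f⟩ = 0. In particular the metric induced by q on the Barbot surface via f is the constant (hence flat) metric ½(du² + dv²). -/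
/-- The induced metric on the Barbot surface is the constant flat metric
½(du² + dv²): the partial derivatives ∂_u f = eᵘz₁ - e⁻ᵘz₃ and
∂_v f = eᵛz₂ - e⁻ᵛz₄ satisfy ⟨∂_u f,∂_u f⟩ = ⟨∂_v f,∂_v f⟩ = 1/2 and
⟨∂_u f,∂_v f⟩ = 0. -/
theorem stmt_9 (E : Type*) [AddCommGroup E] [Module ℝ E]
    (B : E →ₗ[ℝ] E →ₗ[ℝ] ℝ) (hsymm : ∀ x y, B x y = B y x)
    (z : Fin 4 → E)
    (hiso : ∀ i, B (z i) (z i) = 0) (hadj : ∀ i, B (z i) (z (i + 1)) = 0)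
    (h13 : B (z 0) (z 2) = -1/4) (h24 : B (z 1) (z 3) = -1/4)
    (u v : ℝ) (du dv : E)
    (hdu : du = Real.exp u • z 0 - Real.exp (-u) • z 2)
    (hdv : dv = Real.exp v • z 1 - Real.exp (-v) • z 3) :
    B du du = 1/2 ∧ B dv dv = 1/2 ∧ B du dv = 0 := by
  have h01 := hadj 0
  have h12 := hadj 1
  have h23 := hadj 2
  have h30 := hadj 3
  norm_num at h01 h12 h23 h30
  change B (z 1) (z 2) = 0 at h12
  change B (z 2) (z 3) = 0 at h23
  change B (z 3) (z 0) = 0 at h30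
  have h20 : B (z 2) (z 0) = -1/4 := (hsymm _ _).trans h13
  have h31 : B (z 3) (z 1) = -1/4 := (hsymm _ _).trans h24
  have h10 : B (z 1) (z 0) = 0 := (hsymm _ _).trans h01
  have h21 : B (z 2) (z 1) = 0 := (hsymm _ _).trans h12
  have h32 : B (z 3) (z 2) = 0 := (hsymm _ _).trans h23
  have h03 : B (z 0) (z 3) = 0 := (hsymm _ _).trans h30
  have h00 := hiso 0
  have h11 := hiso 1
  have h22 := hiso 2
  have h33 := hiso 3
  have he : ∀ t : ℝ, Real.exp t * Real.exp (-t) = 1 := fun t => by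
    rw [← Real.exp_add]; simp
  subst hdu hdv
  refine ⟨?_, ?_, ?_⟩ <;>
  · simp only [map_sub, map_smul, LinearMap.sub_apply, LinearMap.smul_apply,
      smul_eq_mul, h00, h11, h22, h33, h01, h12, h23, h30, h10, h21, h32, h03,
      h13, h24, h20, h31]
    ring_nf
    try simp [he]
end
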